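/- arXiv:math/0607440 — 9 statements merged into one kernel-verified Lean document; each statement's English description precedes it below -/
import Mathlib

section
/- Let S be an F-semigroup (i.e., S \ Ss₀ is finite for every s₀ ∈ S) acting continuously on a perfect topological space X. If the system is point transitive (there exists x with dense orbit Sx), then it is topologically transitive: for all nonempty open U, V ⊆ X there exists s ∈ S with s⁻¹U ∩ V ≠ ∅. -/
/-! In a perfect T₁ space a dense orbit meets every nonempty open set `U` in infinitely many
points, so infinitely many `s` send `x` into `U`. Given a point `t • x` of the orbit in `V`,
all but finitely many elements of `S` lie in `S t`, hence some `r * t` sends `x` into `U`,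
i.e. `r` sends `t • x ∈ V` into `U`. -/

open Filter Topology

theorem Dense.infinite_inter_of_isOpen {X : Type*} [TopologicalSpace X] [T1Space X]
    [∀ x : X, NeBot (𝓝[≠] x)] {D U : Set X} (hD : Dense D) (hU : IsOpen U)
    (hU_ne : U.Nonempty) : (U ∩ D).Infinite := by
  intro hfin
  obtain ⟨p, hp⟩ := hU_ne
  have hU_sub : U ⊆ U ∩ D := by
    simpa only [hfin.isClosed.closure_eq] using hD.open_subset_closure_inter hU
  exact infinite_of_mem_nhds p (hU.mem_nhds hp) (hfin.subset hU_sub)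

theorem exists_mul_mem_of_infinite {S : Type*} [Mul S] {t : S}
    (ht : {s : S | ¬ ∃ r : S, r * t = s}.Finite) {A : Set S} (hA : A.Infinite) :
    ∃ r : S, r * t ∈ A := by
  obtain ⟨s, hsA, hs⟩ := (hA.sdiff ht).nonempty
  obtain ⟨r, rfl⟩ := not_not.mp hs
  exact ⟨r, hsA⟩

theorem stmt_1_general {S X : Type*} [Semigroup S]
    [TopologicalSpace X] [T2Space X] [SMul S X]
    (hact : ∀ (s t : S) (x : X), (s * t) • x = s • t • x)
    (hF : ∀ s₀ : S, Set.Finite {s : S | ¬ ∃ t : S, t * s₀ = s})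
    (hperf : ∀ x : X, (nhdsWithin x {x}ᶜ).NeBot)
    (x : X) (hx : Dense {y : X | ∃ s : S, s • x = y}) :
    ∀ U V : Set X, IsOpen U → U.Nonempty → IsOpen V → V.Nonempty →
      ∃ s : S, ((fun y : X => s • y) ⁻¹' U ∩ V).Nonempty := by
  intro U V hU hU_ne hV hV_ne
  obtain ⟨_, ⟨t, rfl⟩, htV⟩ := hx.exists_mem_open hV hV_ne
  have hA : ((· • x) ⁻¹' U : Set S).Infinite := by
    refine Set.Infinite.of_image (· • x) ?_
    rw [Set.image_preimage_eq_inter_range]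
    exact hx.infinite_inter_of_isOpen hU hU_ne
  obtain ⟨r, hr⟩ := exists_mul_mem_of_infinite (hF t) hA
  exact ⟨r, t • x, by rw [Set.mem_preimage, ← hact]; exact hr, htV⟩

/-- For an F-semigroup acting on a perfect space, point transitivity
implies topological transitivity. -/
theorem stmt_1 {S X : Type*} [TopologicalSpace S] [Semigroup S]
    [TopologicalSpace X] [T2Space X] [SMul S X]
    (hact : ∀ (s t : S) (x : X), (s * t) • x = s • t • x)
    (hcont : Continuous fun p : S × X => p.1 • p.2)
    (hF : ∀ s₀ : S, Set.Finite {s : S | ¬ ∃ t : S, t * s₀ = s})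
    (hperf : ∀ x : X, (nhdsWithin x {x}ᶜ).NeBot)
    (x : X) (hx : Dense {y : X | ∃ s : S, s • x = y}) :
    ∀ U V : Set X, IsOpen U → U.Nonempty → IsOpen V → V.Nonempty →
      ∃ s : S, ((fun y : X => s • y) ⁻¹' U ∩ V).Nonempty :=
  stmt_1_general hact hF hperf x hx
end

section
/- Let (X,d) be a metric space with a continuous action of a topological semigroup S, and suppose the system is topologically transitive. Then every equicontinuity point of X is a transitive point: Eq(X) ⊆ Trans(X). -/
/-- In a topologically transitive metric system, every equicontinuity
point is a transitive point. -/
theorem stmt_4 {S X : Type*} [TopologicalSpace S] [Semigroup S] [MetricSpace X]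
    [SMul S X]
    (hact : ∀ (s t : S) (x : X), (s * t) • x = s • t • x)
    (hcont : Continuous fun p : S × X => p.1 • p.2)
    (hTT : ∀ U V : Set X, IsOpen U → U.Nonempty → IsOpen V → V.Nonempty →
      ∃ s : S, ∃ v ∈ V, s • v ∈ U)
    (x₀ : X)
    (heq : ∀ ε > 0, ∃ δ > 0, ∀ x : X, dist x₀ x < δ →
      ∀ s : S, dist (s • x₀) (s • x) < ε) :
    Dense {y : X | ∃ s : S, s • x₀ = y} := by
  rw [Metric.dense_iff]
  intro y ε hε
  obtain ⟨δ, hδ, hδ2⟩ := heq (ε / 2) (by linarith)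
  obtain ⟨s, v, hv, hsv⟩ := hTT (Metric.ball y (ε / 2)) (Metric.ball x₀ δ)
    Metric.isOpen_ball ⟨y, Metric.mem_ball_self (by linarith)⟩
    Metric.isOpen_ball ⟨x₀, Metric.mem_ball_self hδ⟩
  refine ⟨s • x₀, ?_, s, rfl⟩
  rw [Metric.mem_ball]
  have h1 : dist (s • x₀) (s • v) < ε / 2 :=
    hδ2 v (by rw [dist_comm]; exact Metric.mem_ball.mp hv) s
  have h2 : dist (s • v) y < ε / 2 := Metric.mem_ball.mp hsv
  calc dist (s • x₀) y ≤ dist (s • x₀) (s • v) + dist (s • v) y := dist_triangle _ _ _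
    _ < ε := by linarith
end

section
/- Let (S,X) be a dynamical system and x₀ ∈ X. Suppose that for every open neighborhood V of x₀ there is a finite set F ⊆ S with closure(Sx₀) ⊆ ⋃_{s∈F} s⁻¹V. Then for every neighborhood V of x₀, the set N(x₀,V) := {s ∈ S : sx₀ ∈ V} is syndetic, i.e., there exists a finite set F ⊆ S with F⁻¹N(x₀,V) = S, where F⁻¹P := {s ∈ S : fs ∈ P for some f ∈ F}. -/
/-- If every open neighborhood V of x₀ admits a finite F with
closure(Sx₀) ⊆ ⋃_{s ∈ F} s⁻¹V, then N(x₀,V) is syndetic for every neighborhood V. -/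
theorem stmt_6 {S X : Type*} [TopologicalSpace S] [Semigroup S]
    [TopologicalSpace X] [T2Space X] [SMul S X]
    (hact : ∀ (s t : S) (x : X), (s * t) • x = s • t • x)
    (hcont : Continuous fun p : S × X => p.1 • p.2)
    (x₀ : X)
    (h2 : ∀ V : Set X, IsOpen V → x₀ ∈ V →
      ∃ F : Finset S, closure {y : X | ∃ s : S, s • x₀ = y} ⊆
        ⋃ s ∈ F, (fun x : X => s • x) ⁻¹' V) :
    ∀ V : Set X, IsOpen V → x₀ ∈ V →
      ∃ F : Finset S, ∀ s : S, ∃ f ∈ F, f * s ∈ {t : S | t • x₀ ∈ V} := by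
  intro V hV hx
  obtain ⟨F, hF⟩ := h2 V hV hx
  refine ⟨F, fun s => ?_⟩
  have : s • x₀ ∈ closure {y : X | ∃ s : S, s • x₀ = y} :=
    subset_closure ⟨s, rfl⟩
  obtain ⟨_, ⟨f, rfl⟩, _, ⟨hfF, rfl⟩, hfv⟩ := hF this
  exact ⟨f, hfF, by simpa [hact] using hfv⟩
end

section
/- Let S be a C-semigroup (S \ Ss₀ is relatively compact for every s₀ ∈ S) acting continuously on a metric space (X,d). If the system is point transitive and there exists at least one equicontinuity point, then every transitive point is an equicontinuity point: Trans(X) ⊆ Eq(X). -/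
/-- For a C-semigroup acting on a metric space, if the system is point
transitive and has an equicontinuity point, then every transitive point is an
equicontinuity point. -/
theorem stmt_9 {S X : Type*} [TopologicalSpace S] [Semigroup S] [MetricSpace X]
    [SMul S X]
    (hact : ∀ (s t : S) (x : X), (s * t) • x = s • t • x)
    (hcont : Continuous fun p : S × X => p.1 • p.2)
    (hC : ∀ s₀ : S, IsCompact (closure {s : S | ¬ ∃ t : S, t * s₀ = s}))
    (hPT : ∃ x : X, Dense {y : X | ∃ s : S, s • x = y})
    (hEq : ∃ x₀ : X, ∀ ε > 0, ∃ δ > 0, ∀ x : X, dist x₀ x < δ →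
      ∀ s : S, dist (s • x₀) (s • x) < ε) :
    ∀ y : X, Dense {z : X | ∃ s : S, s • y = z} →
      ∀ ε > 0, ∃ δ > 0, ∀ x : X, dist y x < δ →
        ∀ s : S, dist (s • y) (s • x) < ε := by
  obtain ⟨x₀, hx₀⟩ := hEq
  intro y hy ε hε
  obtain ⟨δ₁, hδ₁pos, hδ₁⟩ := hx₀ (ε / 3) (by positivity)
  -- find s₀ with s₀ • y close to x₀
  have hx₀cl : x₀ ∈ closure {z : X | ∃ s : S, s • y = z} := hy x₀
  rw [Metric.mem_closure_iff] at hx₀cl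
  obtain ⟨z, ⟨s₀, hs₀z⟩, hzdist⟩ := hx₀cl (δ₁ / 2) (by positivity)
  subst hs₀z
  -- continuity of x ↦ s₀ • x at y
  have hcs : Continuous fun x : X => s₀ • x :=
    hcont.comp (continuous_const.prodMk continuous_id)
  obtain ⟨δ₂, hδ₂pos, hδ₂⟩ := Metric.continuous_iff.mp hcs y (δ₁ / 2) (by positivity)
  -- compact part
  have hK := hC s₀
  have hVopen : IsOpen {p : S × X | dist (p.1 • y) (p.1 • p.2) < ε} := by
    have : Continuous fun p : S × X => dist (p.1 • y) (p.1 • p.2) := by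
      apply Continuous.dist
      · exact hcont.comp (continuous_fst.prodMk continuous_const)
      · exact hcont
    exact isOpen_lt this continuous_const
  have hsub : (closure {s : S | ¬ ∃ t : S, t * s₀ = s}) ×ˢ ({y} : Set X) ⊆
      {p : S × X | dist (p.1 • y) (p.1 • p.2) < ε} := by
    rintro ⟨s, x⟩ ⟨-, hx⟩
    rcases hx with rfl
    simpa using hε
  obtain ⟨U, V, hUopen, hVopen', hKU, hyV, hUV⟩ :=
    generalized_tube_lemma hK isCompact_singleton hVopen hsub
  obtain ⟨δ₃, hδ₃pos, hδ₃⟩ := Metric.isOpen_iff.mp hVopen' y (hyV rfl)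
  refine ⟨min δ₂ δ₃, lt_min hδ₂pos hδ₃pos, fun x hx s => ?_⟩
  by_cases hs : ∃ t : S, t * s₀ = s
  · obtain ⟨t, rfl⟩ := hs
    rw [hact, hact]
    have h1 : dist (t • x₀) (t • (s₀ • y)) < ε / 3 := hδ₁ _ (by linarith) t
    have h2 : dist (t • x₀) (t • (s₀ • x)) < ε / 3 := by
      apply hδ₁ _ _ t
      calc dist x₀ (s₀ • x) ≤ dist x₀ (s₀ • y) + dist (s₀ • y) (s₀ • x) := dist_triangle _ _ _
        _ < δ₁ / 2 + δ₁ / 2 := by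
            apply add_lt_add hzdist
            have := hδ₂ x (by rw [dist_comm]; exact lt_of_lt_of_le hx (min_le_left _ _))
            rwa [dist_comm] at this
        _ = δ₁ := by ring
    calc dist (t • (s₀ • y)) (t • (s₀ • x))
        ≤ dist (t • (s₀ • y)) (t • x₀) + dist (t • x₀) (t • (s₀ • x)) := dist_triangle _ _ _
      _ < ε / 3 + ε / 3 := by rw [dist_comm (t • (s₀ • y))]; exact add_lt_add h1 h2
      _ < ε := by linarith
  · have hsK : s ∈ closure {s : S | ¬ ∃ t : S, t * s₀ = s} := subset_closure hs
    have hxV : x ∈ V := hδ₃ (by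
      simp only [Metric.mem_ball]
      rw [dist_comm]
      exact lt_of_lt_of_le hx (min_le_right _ _))
    exact hUV (Set.mk_mem_prod (hKU hsK) hxV)
end

section
/- Let S be a C-semigroup acting continuously on a metric space (X,d). If the system is minimal (every orbit dense) and has at least one equicontinuity point, then the system is equicontinuous: every point of X is an equicontinuity point. -/
/-- A minimal system over a C-semigroup with at least one
equicontinuity point is equicontinuous. -/
theorem stmt_10 {S X : Type*} [TopologicalSpace S] [Semigroup S] [MetricSpace X]
    [SMul S X]
    (hact : ∀ (s t : S) (x : X), (s * t) • x = s • t • x)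
    (hcont : Continuous fun p : S × X => p.1 • p.2)
    (hC : ∀ s₀ : S, IsCompact (closure {s : S | ¬ ∃ t : S, t * s₀ = s}))
    (hmin : ∀ x : X, Dense {y : X | ∃ s : S, s • x = y})
    (hEq : ∃ x₀ : X, ∀ ε > 0, ∃ δ > 0, ∀ x : X, dist x₀ x < δ →
      ∀ s : S, dist (s • x₀) (s • x) < ε) :
    ∀ y : X, ∀ ε > 0, ∃ δ > 0, ∀ x : X, dist y x < δ →
      ∀ s : S, dist (s • y) (s • x) < ε := by
  obtain ⟨x₀, hx₀⟩ := hEq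
  intro y ε hε
  obtain ⟨δ₀, hδ₀pos, hδ₀⟩ := hx₀ (ε / 2) (by positivity)
  -- find s with s • y close to x₀
  obtain ⟨z, ⟨s, rfl⟩, hdz⟩ :=
    Metric.mem_closure_iff.mp (hmin y x₀) (δ₀ / 2) (by positivity)
  -- continuity of x ↦ s • x at y
  have hcs : Continuous fun x : X => s • x :=
    hcont.comp (continuous_const.prodMk continuous_id)
  obtain ⟨δ₁, hδ₁pos, hδ₁⟩ := Metric.continuous_iff.mp hcs y (δ₀ / 2) (by positivity)
  -- compact part
  have hK := hC s
  have hgcont : Continuous fun p : S × X => dist (p.1 • y) (p.1 • p.2) :=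
    Continuous.dist (hcont.comp (continuous_fst.prodMk continuous_const)) hcont
  have hU : IsOpen {p : S × X | dist (p.1 • y) (p.1 • p.2) < ε} :=
    isOpen_lt hgcont continuous_const
  have hsub : (closure {s' : S | ¬ ∃ t : S, t * s = s'}) ×ˢ ({y} : Set X) ⊆
      {p : S × X | dist (p.1 • y) (p.1 • p.2) < ε} := by
    rintro ⟨k, x⟩ ⟨-, hx⟩
    simp only [Set.mem_singleton_iff] at hx
    subst hx
    simpa using hε
  obtain ⟨u, v, hu, hv, hKu, hyv, huv⟩ :=
    generalized_tube_lemma hK isCompact_singleton hU hsub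
  obtain ⟨δ₂, hδ₂pos, hball⟩ := Metric.isOpen_iff.mp hv y (hyv rfl)
  refine ⟨min δ₁ δ₂, lt_min hδ₁pos hδ₂pos, ?_⟩
  intro x hx s'
  by_cases h : ∃ t, t * s = s'
  · obtain ⟨t, rfl⟩ := h
    have hxy : dist x y < δ₁ := by
      rw [dist_comm]; exact lt_of_lt_of_le hx (min_le_left _ _)
    have h1 : dist x₀ (s • y) < δ₀ := lt_of_lt_of_le hdz (by linarith)
    have h2 : dist x₀ (s • x) < δ₀ :=
      calc dist x₀ (s • x) ≤ dist x₀ (s • y) + dist (s • y) (s • x) := dist_triangle _ _ _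
        _ < δ₀ / 2 + δ₀ / 2 := by
            have := hδ₁ x hxy
            rw [dist_comm] at this
            exact add_lt_add hdz this
        _ = δ₀ := by ring
    have hy' := hδ₀ (s • y) h1 t
    have hx' := hδ₀ (s • x) h2 t
    rw [hact, hact]
    calc dist (t • s • y) (t • s • x)
        ≤ dist (t • s • y) (t • x₀) + dist (t • x₀) (t • s • x) := dist_triangle _ _ _
      _ < ε / 2 + ε / 2 := by rw [dist_comm (t • s • y)]; exact add_lt_add hy' hx'
      _ = ε := by ring
  · have hmem : (s', x) ∈ u ×ˢ v := by
      refine ⟨hKu (subset_closure h), hball ?_⟩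
      rw [Metric.mem_ball, dist_comm]
      exact lt_of_lt_of_le hx (min_le_right _ _)
    exact huv hmem
end

section
/- Let S be a C-semigroup acting continuously on a Polish metric space (X,d), with the system topologically transitive. If the system is non-sensitive, then the set of equicontinuity points Eq(X) is dense in X. -/
/-!
Equicontinuity at `x₀` means that `x₀` lies, for every `ε > 0`, in the open set `stableSet F ε`
of points having a neighbourhood whose image under every map of the family has diameter `< ε`.
By the Baire category theorem it suffices to show that each of these sets is dense. Given an
open `U`, non-sensitivity yields a point `x` and a ball around it whose orbits stay `ε/3`-close to
the orbit of `x`, and transitivity moves some `v ∈ U` into that ball by some `s₀`. Near `v`, the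
maps `t * s₀` are then controlled through `x`, while the remaining maps lie in the relatively
compact set `S \ S s₀` and hence form a family that is equicontinuous at `v`.
-/

open Filter Topology Metric Set

section StableSet

variable {ι X Y : Type*} [TopologicalSpace X] [PseudoMetricSpace Y]

def stableSet (F : ι → X → Y) (ε : ℝ) : Set X :=
  {x₀ | ∃ U ∈ 𝓝 x₀, ∀ x ∈ U, ∀ x' ∈ U, ∀ i, dist (F i x) (F i x') < ε}

theorem stableSet_mono (F : ι → X → Y) {ε ε' : ℝ} (h : ε ≤ ε') :
    stableSet F ε ⊆ stableSet F ε' :=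
  fun _ ⟨U, hU, hF⟩ => ⟨U, hU, fun x hx x' hx' i => (hF x hx x' hx' i).trans_le h⟩

theorem isOpen_stableSet (F : ι → X → Y) (ε : ℝ) : IsOpen (stableSet F ε) :=
  isOpen_iff_mem_nhds.2 fun _ ⟨U, hU, hF⟩ =>
    mem_of_superset (interior_mem_nhds.2 hU) fun _ hx => ⟨U, mem_interior_iff_mem_nhds.1 hx, hF⟩

theorem equicontinuousAt_iff_forall_mem_stableSet {F : ι → X → Y} {x₀ : X} :
    EquicontinuousAt F x₀ ↔ ∀ ε > 0, x₀ ∈ stableSet F ε :=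
  Metric.equicontinuousAt_iff_pair

theorem dense_setOf_equicontinuousAt [BaireSpace X] {F : ι → X → Y}
    (hF : ∀ ε > 0, Dense (stableSet F ε)) : Dense {x | EquicontinuousAt F x} := by
  have hdense : Dense (⋂ n : ℕ, stableSet F (1 / (n + 1))) :=
    dense_iInter_of_isOpen (fun _ => isOpen_stableSet F _) fun _ => hF _ Nat.one_div_pos_of_nat
  refine hdense.mono fun x hx => equicontinuousAt_iff_forall_mem_stableSet.2 fun ε hε => ?_
  obtain ⟨n, hn⟩ := exists_nat_one_div_lt hε
  exact stableSet_mono F hn.le (mem_iInter.1 hx n)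

end StableSet

theorem IsCompact.equicontinuousAt_of_continuous_uncurry {S X Y : Type*} [TopologicalSpace S]
    [TopologicalSpace X] [UniformSpace Y] {f : S → X → Y} (hf : Continuous (Function.uncurry f))
    {K : Set S} (hK : IsCompact K) (x₀ : X) :
    EquicontinuousAt (fun s : K => f s) x₀ := by
  intro U hU
  have hK' : ∀ᶠ x in 𝓝 x₀, ∀ s ∈ K, (f s x₀, f s x) ∈ U := by
    refine hK.eventually_forall_of_forall_eventually fun s _ => ?_
    have hcont : Continuous fun p : X × S => (f p.2 x₀, f p.2 p.1) := by fun_prop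
    exact hcont.continuousAt.preimage_mem_nhds (nhds_le_uniformity (f s x₀) hU)
  exact hK'.mono fun _ hx s => hx s s.2

section SemigroupAction

variable {S X : Type*} [TopologicalSpace S] [Semigroup S] [PseudoMetricSpace X] [SMul S X]

theorem dense_stableSet_smul (hact : ∀ (s t : S) (x : X), (s * t) • x = s • t • x)
    (hcont : Continuous fun p : S × X => p.1 • p.2)
    (hC : ∀ s₀ : S, IsCompact (closure {s : S | ¬ ∃ t : S, t * s₀ = s}))
    (hTT : ∀ U V : Set X, IsOpen U → U.Nonempty → IsOpen V → V.Nonempty →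
      ∃ s : S, ∃ v ∈ V, s • v ∈ U)
    {ε : ℝ} (hε : 0 < ε) (hns : ∃ x : X, ∃ δ > (0 : ℝ), ∀ y : X, dist x y < δ →
      ∀ s : S, dist (s • x) (s • y) ≤ ε / 3) :
    Dense (stableSet (fun s : S => (s • · : X → X)) ε) := by
  refine dense_iff_inter_open.2 fun U hU hUne => ?_
  obtain ⟨x, δ, hδ, hx⟩ := hns
  obtain ⟨s₀, v, hvU, hv⟩ := hTT (ball x δ) U isOpen_ball ⟨x, mem_ball_self hδ⟩ hU hUne
  have hs₀ : (s₀ • · : X → X) ⁻¹' ball x δ ∈ 𝓝 v :=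
    (hcont.comp (continuous_const.prodMk continuous_id)).continuousAt.preimage_mem_nhds
      (isOpen_ball.mem_nhds hv)
  have hK := Metric.equicontinuousAt_iff_right.1
    ((hC s₀).equicontinuousAt_of_continuous_uncurry (f := fun s (x : X) => s • x) hcont v)
    (ε / 3) (by positivity)
  refine ⟨v, hvU, _, inter_mem hs₀ hK, ?_⟩
  rintro y ⟨hy, hyK⟩ z ⟨hz, hzK⟩ s
  by_cases hs : ∃ t, t * s₀ = s
  · obtain ⟨t, rfl⟩ := hs
    have hxy := hx _ (mem_ball'.1 hy) t
    have hxz := hx _ (mem_ball'.1 hz) t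
    simp only [hact]
    linarith [dist_triangle_left (t • s₀ • y) (t • s₀ • z) (t • x)]
  · have hvy := hyK ⟨s, subset_closure hs⟩
    have hvz := hzK ⟨s, subset_closure hs⟩
    linarith [dist_triangle_left (s • y) (s • z) (s • v)]

end SemigroupAction

/-- A topologically transitive non-sensitive system of a C-semigroup
on a Polish metric space has a dense set of equicontinuity points. -/
theorem stmt_12 {S X : Type*} [TopologicalSpace S] [Semigroup S] [MetricSpace X]
    [PolishSpace X] [SMul S X]
    (hact : ∀ (s t : S) (x : X), (s * t) • x = s • t • x)
    (hcont : Continuous fun p : S × X => p.1 • p.2)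
    (hC : ∀ s₀ : S, IsCompact (closure {s : S | ¬ ∃ t : S, t * s₀ = s}))
    (hTT : ∀ U V : Set X, IsOpen U → U.Nonempty → IsOpen V → V.Nonempty →
      ∃ s : S, ∃ v ∈ V, s • v ∈ U)
    (hns : ∀ c > (0:ℝ), ∃ x : X, ∃ δ > (0:ℝ), ∀ y : X, dist x y < δ →
      ∀ s : S, dist (s • x) (s • y) ≤ c) :
    Dense {x₀ : X | ∀ ε > 0, ∃ δ > 0, ∀ x : X, dist x₀ x < δ →
      ∀ s : S, dist (s • x₀) (s • x) < ε} := by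
  have hEq : Dense {x | EquicontinuousAt (fun s : S => (s • · : X → X)) x} :=
    dense_setOf_equicontinuousAt fun ε hε =>
      dense_stableSet_smul hact hcont hC hTT hε (hns (ε / 3) (by positivity))
  refine hEq.mono fun x₀ hx₀ ε hε => ?_
  obtain ⟨δ, hδ, h⟩ := Metric.equicontinuousAt_iff.1 hx₀ ε hε
  exact ⟨δ, hδ, fun x hx => h x (by rwa [dist_comm])⟩
end

section
/- Let S be a C-semigroup acting continuously on a Polish metric space (X,d). Suppose the system is an M-system (topologically transitive with a dense set of almost periodic points) and Eq(X) ≠ ∅. Then the system is minimal and equicontinuous. -/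
/-!
A point `a` whose orbit accumulates at an equicontinuity point `x₀` is itself an equicontinuity
point: write `s = t * s₁` with `s₁ • a` close to `x₀` and use equicontinuity at `x₀` for `t`; the
remaining `s` form a relatively compact set, and a compact family of maps is equicontinuous.

By Baire there is a point `z` with dense orbit, and it is an equicontinuity point. Shadowing an
almost periodic point close to `z` shows that `z` returns close to itself after one of finitely
many steps, from anywhere on its orbit, hence from anywhere in `X`. So `z` lies in every orbit
closure, which makes the system minimal, and then every point is an equicontinuity point.
-/

open Filter Metric Set Topology MulAction

def IsAlmostPeriodicPt (S : Type*) {X : Type*} [TopologicalSpace X] [SMul S X] (x : X) : Prop :=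
  IsCompact (closure (orbit S x)) ∧
    ∀ y ∈ closure (orbit S x), closure (orbit S x) ⊆ closure (orbit S y)

section Topological

variable {S X : Type*} [TopologicalSpace X]

theorem IsCompact.exists_finset_smul_mem [SMul S X] [ContinuousConstSMul S X] {K U : Set X}
    (hK : IsCompact K) (hU : IsOpen U) (h : ∀ k ∈ K, ∃ s : S, s • k ∈ U) :
    ∃ F : Finset S, ∀ k ∈ K, ∃ f ∈ F, f • k ∈ U := by
  obtain ⟨F, hF⟩ := hK.elim_finite_subcover (fun s : S => (s • ·) ⁻¹' U)
    (fun s => hU.preimage (continuous_const_smul s)) fun k hk => mem_iUnion.2 (h k hk)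
  exact ⟨F, fun k hk => by simpa using hF hk⟩

theorem IsAlmostPeriodicPt.exists_finset_smul_smul_mem [SMul S X] [ContinuousConstSMul S X]
    {y : X} {U : Set X} (hy : IsAlmostPeriodicPt S y) (hU : IsOpen U)
    (hyU : (closure (orbit S y) ∩ U).Nonempty) :
    ∃ F : Finset S, ∀ s : S, ∃ f ∈ F, f • s • y ∈ U := by
  obtain ⟨F, hF⟩ := hy.1.exists_finset_smul_mem hU fun k hk => by
    obtain ⟨_, ⟨s, rfl⟩, hs⟩ := (closure_inter_open_nonempty_iff hU).1
      (hyU.mono (inter_subset_inter_left U (hy.2 k hk)))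
    exact ⟨s, hs⟩
  exact ⟨F, fun s => hF _ (subset_closure (mem_orbit y s))⟩

theorem closure_orbit_subset_of_mem [Semigroup S] [SemigroupAction S X] [ContinuousConstSMul S X]
    {x y : X} (hy : y ∈ closure (orbit S x)) : closure (orbit S y) ⊆ closure (orbit S x) :=
  closure_minimal (by
    rintro _ ⟨s, rfl⟩
    exact map_mem_closure (continuous_const_smul s) hy (by
      rintro _ ⟨t, rfl⟩
      exact ⟨s * t, mul_smul s t x⟩)) isClosed_closure

theorem exists_dense_orbit [BaireSpace X] [SecondCountableTopology X] [Nonempty X] [SMul S X]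
    [ContinuousConstSMul S X]
    (hTT : ∀ U V : Set X, IsOpen U → U.Nonempty → IsOpen V → V.Nonempty →
      ∃ s : S, ∃ v ∈ V, s • v ∈ U) :
    ∃ z : X, Dense (orbit S z) := by
  obtain ⟨b, hbc, hbne, hb⟩ := TopologicalSpace.exists_countable_basis X
  have hopen : ∀ U ∈ b, IsOpen (⋃ s : S, (s • ·) ⁻¹' U) := fun U hU =>
    isOpen_iUnion fun s => (hb.isOpen hU).preimage (continuous_const_smul s)
  have hdense : ∀ U ∈ b, Dense (⋃ s : S, (s • ·) ⁻¹' U) := by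
    refine fun U hU => dense_iff_inter_open.2 fun V hV hVne => ?_
    obtain ⟨s, v, hv, hsv⟩ := hTT U V (hb.isOpen hU)
      (nonempty_iff_ne_empty.2 fun h => hbne (h ▸ hU)) hV hVne
    exact ⟨v, hv, mem_iUnion.2 ⟨s, hsv⟩⟩
  obtain ⟨z, hz⟩ := (dense_biInter_of_isOpen hopen hbc hdense).nonempty
  refine ⟨z, hb.dense_iff.2 fun U hU _ => ?_⟩
  obtain ⟨s, hs⟩ := mem_iUnion.1 (mem_iInter₂.1 hz U hU)
  exact ⟨s • z, hs, s, rfl⟩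

end Topological

theorem equicontinuousAt_smul_of_isCompact {S X : Type*} [TopologicalSpace S] [UniformSpace X]
    [SMul S X] [ContinuousSMul S X] {C : Set S} (hC : IsCompact C) (a : X) :
    EquicontinuousAt (fun u : C => ((u : S) • · : X → X)) a := by
  intro U hU
  have : ∀ᶠ p in 𝓝 a, ∀ u ∈ C, (u • a, u • p) ∈ U :=
    hC.eventually_forall_of_forall_eventually fun u _ =>
      (((continuous_snd.smul continuous_const).prodMk (continuous_snd.smul continuous_fst)
        ).continuousAt (x := (a, u))).preimage_mem_nhds (nhds_le_uniformity _ hU)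
  exact this.mono fun p hp u => hp u u.2

section Metric

variable {S X : Type*} [Semigroup S] [PseudoMetricSpace X] [SemigroupAction S X]

theorem equicontinuousAt_smul_of_mem_closure_orbit [TopologicalSpace S] [ContinuousSMul S X]
    (hC : ∀ s₀ : S, IsCompact (closure {s : S | ¬ ∃ t : S, t * s₀ = s})) {x₀ a : X}
    (hx₀ : EquicontinuousAt (fun s : S => (s • · : X → X)) x₀)
    (ha : x₀ ∈ closure (orbit S a)) :
    EquicontinuousAt (fun s : S => (s • · : X → X)) a := by
  rw [Metric.equicontinuousAt_iff_right] at hx₀ ⊢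
  intro ε hε
  set W := interior {x : X | ∀ t : S, dist (t • x₀) (t • x) < ε / 2}
  obtain ⟨_, hs₁W, s₁, rfl⟩ :=
    mem_closure_iff_nhds.1 ha W (interior_mem_nhds.2 (hx₀ _ (half_pos hε)))
  have hnear : ∀ᶠ p in 𝓝 a, s₁ • p ∈ W :=
    (continuous_const_smul s₁).continuousAt.preimage_mem_nhds (isOpen_interior.mem_nhds hs₁W)
  have hfar := Metric.equicontinuousAt_iff_right.1 (equicontinuousAt_smul_of_isCompact (hC s₁) a)
    ε hε
  filter_upwards [hnear, hfar] with p hp hfarp s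
  by_cases hs : ∃ t, t * s₁ = s
  · obtain ⟨t, rfl⟩ := hs
    rw [mul_smul, mul_smul]
    calc dist (t • s₁ • a) (t • s₁ • p)
        ≤ dist (t • x₀) (t • s₁ • a) + dist (t • x₀) (t • s₁ • p) := dist_triangle_left _ _ _
      _ < ε / 2 + ε / 2 := add_lt_add (interior_subset hs₁W t) (interior_subset hp t)
      _ = ε := add_halves ε
  · exact hfarp ⟨s, subset_closure hs⟩

theorem exists_finset_dist_smul_smul_lt [ContinuousConstSMul S X] {z : X}
    (hz : EquicontinuousAt (fun s : S => (s • · : X → X)) z) (hrec : z ∈ closure (orbit S z))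
    (hAP : z ∈ closure {y : X | IsAlmostPeriodicPt S y}) {ε : ℝ} (hε : 0 < ε) :
    ∃ F : Finset S, ∀ s : S, ∃ f ∈ F, dist (f • s • z) z < ε := by
  obtain ⟨δ, hδ, hzδ⟩ := Metric.equicontinuousAt_iff.1 hz (ε / 3) (by positivity)
  obtain ⟨y, hy, hzy⟩ := Metric.mem_closure_iff.1 hAP δ hδ
  have hshadow : ∀ t : S, dist (t • z) (t • y) < ε / 3 := hzδ y (by rwa [dist_comm])
  obtain ⟨_, ⟨s₀, rfl⟩, hs₀⟩ := Metric.mem_closure_iff.1 hrec (ε / 3) (by positivity)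
  have hyU : (closure (orbit S y) ∩ ball z (2 * ε / 3)).Nonempty := by
    refine ⟨s₀ • y, subset_closure (mem_orbit y s₀), ?_⟩
    rw [mem_ball]
    calc dist (s₀ • y) z ≤ dist (s₀ • y) (s₀ • z) + dist (s₀ • z) z := dist_triangle _ _ _
      _ < ε / 3 + ε / 3 :=
        add_lt_add (dist_comm (s₀ • z) (s₀ • y) ▸ hshadow s₀) (dist_comm z _ ▸ hs₀)
      _ = 2 * ε / 3 := by ring
  obtain ⟨F, hF⟩ := hy.exists_finset_smul_smul_mem isOpen_ball hyU
  refine ⟨F, fun s => ?_⟩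
  obtain ⟨f, hf, hfs⟩ := hF s
  refine ⟨f, hf, ?_⟩
  calc dist (f • s • z) z ≤ dist (f • s • z) (f • s • y) + dist (f • s • y) z := dist_triangle _ _ _
    _ < ε / 3 + 2 * ε / 3 := add_lt_add (by simpa only [mul_smul] using hshadow (f * s)) hfs
    _ = ε := by ring

theorem mem_closure_orbit_of_mem_closure_orbit [ContinuousConstSMul S X] {x z : X}
    (hret : ∀ ε > 0, ∃ F : Finset S, ∀ s : S, ∃ f ∈ F, dist (f • s • z) z < ε)
    (hx : x ∈ closure (orbit S z)) : z ∈ closure (orbit S x) := by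
  refine Metric.mem_closure_iff.2 fun ε hε => ?_
  obtain ⟨F, hF⟩ := hret (ε / 2) (half_pos hε)
  have hclosed : IsClosed (⋃ f ∈ F, {q : X | dist (f • q) z ≤ ε / 2}) :=
    isClosed_biUnion_finset fun f _ =>
      isClosed_le ((continuous_const_smul f).dist continuous_const) continuous_const
  have horbit : orbit S z ⊆ ⋃ f ∈ F, {q : X | dist (f • q) z ≤ ε / 2} := by
    rintro _ ⟨s, rfl⟩
    obtain ⟨f, hf, hfs⟩ := hF s
    exact mem_biUnion hf hfs.le
  obtain ⟨f, -, hfx⟩ := mem_iUnion₂.1 (closure_minimal horbit hclosed hx)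
  exact ⟨f • x, mem_orbit x f, by rw [dist_comm]; exact hfx.trans_lt (half_lt_self hε)⟩

end Metric

/-- An M-system of a C-semigroup on a Polish metric space with an
equicontinuity point is minimal and equicontinuous. -/
theorem stmt_14 {S X : Type*} [TopologicalSpace S] [Semigroup S] [MetricSpace X]
    [PolishSpace X] [SMul S X]
    (hact : ∀ (s t : S) (x : X), (s * t) • x = s • t • x)
    (hcont : Continuous fun p : S × X => p.1 • p.2)
    (hC : ∀ s₀ : S, IsCompact (closure {s : S | ¬ ∃ t : S, t * s₀ = s}))
    (hTT : ∀ U V : Set X, IsOpen U → U.Nonempty → IsOpen V → V.Nonempty →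
      ∃ s : S, ∃ v ∈ V, s • v ∈ U)
    (hAP : Dense {x : X | IsCompact (closure {y : X | ∃ s : S, s • x = y}) ∧
      ∀ y ∈ closure {y : X | ∃ s : S, s • x = y},
        closure {y : X | ∃ s : S, s • x = y} ⊆ closure {z : X | ∃ s : S, s • y = z}})
    (hEq : ∃ x₀ : X, ∀ ε > 0, ∃ δ > 0, ∀ x : X, dist x₀ x < δ →
      ∀ s : S, dist (s • x₀) (s • x) < ε) :
    (∀ x : X, Dense {y : X | ∃ s : S, s • x = y}) ∧
    (∀ x₀ : X, ∀ ε > 0, ∃ δ > 0, ∀ x : X, dist x₀ x < δ →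
      ∀ s : S, dist (s • x₀) (s • x) < ε) := by
  let : SemigroupAction S X := { mul_smul := hact }
  have : ContinuousSMul S X := ⟨hcont⟩
  have hEqAt (a : X) : EquicontinuousAt (fun s : S => (s • · : X → X)) a ↔
      ∀ ε > 0, ∃ δ > 0, ∀ x : X, dist a x < δ → ∀ s : S, dist (s • a) (s • x) < ε := by
    simp_rw [Metric.equicontinuousAt_iff, dist_comm _ a]
  obtain ⟨x₀, hx₀⟩ := hEq
  rw [← hEqAt] at hx₀
  have : Nonempty X := ⟨x₀⟩
  obtain ⟨z, hz⟩ := exists_dense_orbit hTT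
  have hzEq := equicontinuousAt_smul_of_mem_closure_orbit hC hx₀ (hz x₀)
  have hmin (x : X) : Dense (orbit S x) :=
    dense_closure.1 <| (dense_closure.2 hz).mono <| closure_orbit_subset_of_mem <|
      mem_closure_orbit_of_mem_closure_orbit
        (fun _ hε => exists_finset_dist_smul_smul_lt hzEq (hz z) (hAP z) hε) (hz x)
  exact ⟨hmin, fun a => (hEqAt a).1 (equicontinuousAt_smul_of_mem_closure_orbit hC hx₀ (hmin a x₀))⟩
end

section
/- Let S be a C-semigroup acting continuously on a Polish metric space (X,d). If the system is an M-system which is either not minimal or not equicontinuous, then the system is sensitive: there exists c > 0 such that for every x ∈ X and δ > 0 there are y with d(x,y) < δ and s ∈ S with d(sx,sy) > c. -/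
/-- Main result: An M-system of a C-semigroup on a Polish metric
space which is not minimal or not equicontinuous is sensitive. -/
theorem stmt_15 {S X : Type*} [TopologicalSpace S] [Semigroup S] [MetricSpace X]
    [PolishSpace X] [SMul S X]
    (hact : ∀ (s t : S) (x : X), (s * t) • x = s • t • x)
    (hcont : Continuous fun p : S × X => p.1 • p.2)
    (hC : ∀ s₀ : S, IsCompact (closure {s : S | ¬ ∃ t : S, t * s₀ = s}))
    (hTT : ∀ U V : Set X, IsOpen U → U.Nonempty → IsOpen V → V.Nonempty →
      ∃ s : S, ∃ v ∈ V, s • v ∈ U)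
    (hAP : Dense {x : X | IsCompact (closure {y : X | ∃ s : S, s • x = y}) ∧
      ∀ y ∈ closure {y : X | ∃ s : S, s • x = y},
        closure {y : X | ∃ s : S, s • x = y} ⊆ closure {z : X | ∃ s : S, s • y = z}})
    (hnot : ¬ (∀ x : X, Dense {y : X | ∃ s : S, s • x = y}) ∨
      ¬ (∀ x₀ : X, ∀ ε > 0, ∃ δ > 0, ∀ x : X, dist x₀ x < δ →
        ∀ s : S, dist (s • x₀) (s • x) < ε)) :
    ∃ c > (0:ℝ), ∀ x : X, ∀ δ > (0:ℝ), ∃ y : X, dist x y < δ ∧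
      ∃ s : S, dist (s • x) (s • y) > c := by
  classical
  have hcontS : ∀ s : S, Continuous fun y : X => s • y := fun s =>
    hcont.comp (continuous_const.prodMk continuous_id)
  -- invariance of orbit closures
  have hinv : ∀ (z : X) (s : S) (y : X), y ∈ closure {w : X | ∃ t : S, t • z = w} →
      s • y ∈ closure {w : X | ∃ t : S, t • z = w} := by
    intro z s y hy
    have h1 : (fun w : X => s • w) '' {w : X | ∃ t : S, t • z = w} ⊆
        {w : X | ∃ t : S, t • z = w} := by
      rintro _ ⟨_, ⟨t, rfl⟩, rfl⟩
      exact ⟨s * t, hact s t z⟩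
    have h2 := image_closure_subset_closure_image (hcontS s)
      (s := {w : X | ∃ t : S, t • z = w})
    exact closure_mono h1 (h2 ⟨y, hy, rfl⟩)
  by_cases hmin : ∀ x : X, Dense {y : X | ∃ s : S, s • x = y}
  · -- minimal case: the system must be non-equicontinuous; show sensitivity by contradiction
    have hne := hnot.resolve_left (not_not_intro hmin)
    by_contra hs
    push_neg at hs
    apply hne
    intro x₀ ε hε
    obtain ⟨w, δ₀, hδ₀, hw⟩ := hs (ε/8) (by positivity)
    have hpair : ∀ y y' : X, dist y w < δ₀ → dist y' w < δ₀ →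
        ∀ u : S, dist (u • y) (u • y') ≤ ε/4 := by
      intro y y' hy hy' u
      have h1 := hw y (by rw [dist_comm]; exact hy) u
      have h2 := hw y' (by rw [dist_comm]; exact hy') u
      have h3 := dist_triangle (u • y) (u • w) (u • y')
      rw [dist_comm (u • y) (u • w)] at h3
      linarith
    -- find s sending x₀ close to w
    obtain ⟨bb, ⟨s, rfl⟩, hbw⟩ := Metric.mem_closure_iff.mp (hmin x₀ w) δ₀ hδ₀
    -- hbw : dist w (s • x₀) < δ₀
    have hpre : IsOpen ((fun y : X => s • y) ⁻¹' Metric.ball w δ₀) :=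
      Metric.isOpen_ball.preimage (hcontS s)
    have hx₀mem : x₀ ∈ (fun y : X => s • y) ⁻¹' Metric.ball w δ₀ := by
      simp only [Set.mem_preimage, Metric.mem_ball]
      rw [dist_comm]; exact hbw
    obtain ⟨δ₁, hδ₁, hball₁⟩ := Metric.isOpen_iff.mp hpre x₀ hx₀mem
    -- tube lemma for the compact remainder
    have hOopen : IsOpen {p : S × X | dist (p.1 • p.2) (p.1 • x₀) < ε/2} :=
      isOpen_lt (hcont.dist (hcont.comp (continuous_fst.prodMk continuous_const)))
        continuous_const
    have hsub : (closure {s' : S | ¬ ∃ t : S, t * s = s'}) ×ˢ ({x₀} : Set X) ⊆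
        {p : S × X | dist (p.1 • p.2) (p.1 • x₀) < ε/2} := by
      rintro ⟨k, y⟩ ⟨-, hy⟩
      have : y = x₀ := hy
      subst this
      simp only [Set.mem_setOf_eq, dist_self]
      positivity
    obtain ⟨U', V', -, hV'open, hKU, hxV, hUV⟩ :=
      generalized_tube_lemma (hC s) isCompact_singleton hOopen hsub
    obtain ⟨δ₂, hδ₂, hball₂⟩ := Metric.isOpen_iff.mp hV'open x₀ (hxV rfl)
    refine ⟨min δ₁ δ₂, by positivity, ?_⟩
    intro x hx s'
    by_cases hcase : ∃ t : S, t * s = s'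
    · obtain ⟨u, rfl⟩ := hcase
      rw [hact, hact]
      have h1 : dist (s • x₀) w < δ₀ := by rw [dist_comm]; exact hbw
      have hxmem : x ∈ Metric.ball x₀ δ₁ := by
        rw [Metric.mem_ball, dist_comm]
        exact lt_of_lt_of_le hx (min_le_left _ _)
      have h2 : dist (s • x) w < δ₀ := by
        have := hball₁ hxmem
        simpa only [Set.mem_preimage, Metric.mem_ball] using this
      have := hpair (s • x₀) (s • x) h1 h2 u
      linarith
    · have hk : s' ∈ closure {s' : S | ¬ ∃ t : S, t * s = s'} := subset_closure hcase
      have hxV' : x ∈ V' := by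
        apply hball₂
        rw [Metric.mem_ball, dist_comm]
        exact lt_of_lt_of_le hx (min_le_right _ _)
      have hmem := hUV (Set.mk_mem_prod (hKU hk) hxV')
      simp only [Set.mem_setOf_eq] at hmem
      rw [dist_comm] at hmem
      linarith
  · -- non-minimal case: direct proof of sensitivity
    push_neg at hmin
    obtain ⟨z₀, hz₀⟩ := hmin
    haveI : Nonempty X := ⟨z₀⟩
    obtain ⟨sS, -, -, -⟩ := hTT Set.univ Set.univ isOpen_univ ⟨z₀, trivial⟩
      isOpen_univ ⟨z₀, trivial⟩
    haveI : Nonempty S := ⟨sS⟩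
    obtain ⟨p, hp⟩ := hAP.nonempty
    set Y₁ := closure {y : X | ∃ s : S, s • p = y} with hY₁def
    have hY₁c : IsCompact Y₁ := hp.1
    have hY₁ne : Y₁.Nonempty := ⟨sS • p, subset_closure ⟨sS, rfl⟩⟩
    have hY₁inv : ∀ (s : S) (y : X), y ∈ Y₁ → s • y ∈ Y₁ := fun s y hy => hinv p s y hy
    have hY₁cl : IsClosed Y₁ := by rw [hY₁def]; exact isClosed_closure
    have hY₁univ : Y₁ ≠ Set.univ := by
      intro h
      apply hz₀
      rw [dense_iff_closure_eq]
      have hz : z₀ ∈ Y₁ := by rw [h]; trivial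
      have h2 := hp.2 z₀ hz
      rw [← hY₁def, h] at h2
      exact Set.univ_subset_iff.mp h2
    obtain ⟨xstar, hxstar⟩ := (Set.ne_univ_iff_exists_notMem _).mp hY₁univ
    -- a second minimal set, disjoint from Y₁
    have hexb : ∃ b, (IsCompact (closure {y : X | ∃ s : S, s • b = y}) ∧
        ∀ y ∈ closure {y : X | ∃ s : S, s • b = y},
          closure {y : X | ∃ s : S, s • b = y} ⊆ closure {z : X | ∃ s : S, s • y = z}) ∧
        closure {y : X | ∃ s : S, s • b = y} ∩ Y₁ = ∅ := by
      by_contra hall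
      push_neg at hall
      have horbsub : ∀ b, (IsCompact (closure {y : X | ∃ s : S, s • b = y}) ∧
          ∀ y ∈ closure {y : X | ∃ s : S, s • b = y},
            closure {y : X | ∃ s : S, s • b = y} ⊆ closure {z : X | ∃ s : S, s • y = z}) →
          ∀ s : S, s • b ∈ Y₁ := by
        intro b hb s
        obtain ⟨y, hyM, hyY⟩ := hall b hb
        have h1 := hb.2 y hyM
        have h2 : closure {z : X | ∃ s : S, s • y = z} ⊆ Y₁ := by
          apply closure_minimal ?_ isClosed_closure
          rintro _ ⟨u, rfl⟩
          exact hY₁inv u y hyY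
        exact h2 (h1 (subset_closure ⟨s, rfl⟩))
      have hUopen : IsOpen Y₁ᶜ := isClosed_closure.isOpen_compl
      have hUne : Y₁ᶜ.Nonempty := ⟨xstar, hxstar⟩
      obtain ⟨s₁, v, hv, hsv⟩ := hTT Y₁ᶜ Y₁ᶜ hUopen hUne hUopen hUne
      have hWopen : IsOpen (Y₁ᶜ ∩ (fun y : X => s₁ • y) ⁻¹' Y₁ᶜ) :=
        hUopen.inter (hUopen.preimage (hcontS s₁))
      obtain ⟨b, hbA, hbW⟩ := hAP.exists_mem_open hWopen ⟨v, hv, hsv⟩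
      exact hbW.2 (horbsub b hbA s₁)
    obtain ⟨b, hb, hdisj⟩ := hexb
    set Y₂ := closure {y : X | ∃ s : S, s • b = y} with hY₂def
    have hY₂c : IsCompact Y₂ := hb.1
    have hY₂ne : Y₂.Nonempty := ⟨sS • b, subset_closure ⟨sS, rfl⟩⟩
    have hY₂inv : ∀ (s : S) (y : X), y ∈ Y₂ → s • y ∈ Y₂ := fun s y hy => hinv b s y hy
    -- the separation constant
    obtain ⟨ybar, hybar, hymin⟩ := hY₂c.exists_isMinOn hY₂ne
      (Metric.continuous_infDist_pt Y₁).continuousOn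
    set D := Metric.infDist ybar Y₁ with hDdef
    have hDpos : 0 < D := by
      rcases eq_or_lt_of_le (Metric.infDist_nonneg (x := ybar) (s := Y₁)) with h | h
      · exfalso
        have hcl : ybar ∈ closure Y₁ := (Metric.mem_closure_iff_infDist_zero hY₁ne).mpr h.symm
        rw [hY₁cl.closure_eq] at hcl
        exact Set.eq_empty_iff_forall_notMem.mp hdisj ybar ⟨hybar, hcl⟩
      · exact h
    have hDle : ∀ y₁ ∈ Y₁, ∀ y₂ ∈ Y₂, D ≤ dist y₁ y₂ := by
      intro y₁ h₁ y₂ h₂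
      calc D ≤ Metric.infDist y₂ Y₁ := hymin h₂
        _ ≤ dist y₂ y₁ := Metric.infDist_le_dist_of_mem h₁
        _ = dist y₁ y₂ := dist_comm _ _
    refine ⟨D/33, by positivity, ?_⟩
    intro x δ hδ
    have hsum : D ≤ Metric.infDist x Y₁ + Metric.infDist x Y₂ := by
      obtain ⟨y₁, h₁, e₁⟩ := hY₁c.exists_infDist_eq_dist hY₁ne x
      obtain ⟨y₂, h₂, e₂⟩ := hY₂c.exists_infDist_eq_dist hY₂ne x
      have hD := hDle y₁ h₁ y₂ h₂
      have tri := dist_triangle y₁ x y₂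
      rw [dist_comm y₁ x] at tri
      rw [e₁, e₂]
      linarith
    -- the key construction, for either of the two minimal sets
    have key : ∀ Y : Set X, Y.Nonempty → (∀ (s : S) (y : X), y ∈ Y → s • y ∈ Y) →
        D/2 ≤ Metric.infDist x Y →
        ∃ y, dist x y < δ ∧ ∃ s : S, dist (s • x) (s • y) > D/33 := by
      intro Y hYne hYinv hYfar
      obtain ⟨a, haA, haB⟩ := hAP.exists_mem_open Metric.isOpen_ball
        ⟨x, Metric.mem_ball_self hδ⟩
      have hax : dist x a < δ := by rw [dist_comm]; exact Metric.mem_ball.mp haB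
      have hMac : IsCompact (closure {y : X | ∃ s : S, s • a = y}) := haA.1
      have hMamin := haA.2
      have horb_a : ∀ s : S, s • a ∈ closure {y : X | ∃ s : S, s • a = y} :=
        fun s => subset_closure ⟨s, rfl⟩
      by_cases hclose : ∀ m ∈ closure {y : X | ∃ s : S, s • a = y},
          Metric.infDist m Y ≤ D/8
      · obtain ⟨s₀, v, hvB, hvU⟩ := hTT (Metric.ball x (D/16)) (Metric.ball x δ)
          Metric.isOpen_ball ⟨x, Metric.mem_ball_self (by positivity)⟩
          Metric.isOpen_ball ⟨x, Metric.mem_ball_self hδ⟩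
        have h1 : Metric.infDist (s₀ • a) Y ≤ D/8 := hclose _ (horb_a s₀)
        have h2 : Metric.infDist x Y ≤ Metric.infDist (s₀ • v) Y + dist x (s₀ • v) :=
          Metric.infDist_le_infDist_add_dist
        have h3 : dist x (s₀ • v) < D/16 := by
          rw [dist_comm]; exact Metric.mem_ball.mp hvU
        have h4 : Metric.infDist (s₀ • v) Y ≤
            Metric.infDist (s₀ • a) Y + dist (s₀ • v) (s₀ • a) :=
          Metric.infDist_le_infDist_add_dist
        have tri : dist (s₀ • v) (s₀ • a) ≤
            dist (s₀ • x) (s₀ • v) + dist (s₀ • x) (s₀ • a) := by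
          rw [dist_comm (s₀ • x) (s₀ • v)]
          exact dist_triangle _ _ _
        rcases le_or_gt (dist (s₀ • x) (s₀ • a)) (D/33) with hle | hgt
        · refine ⟨v, by rw [dist_comm]; exact Metric.mem_ball.mp hvB, s₀, by linarith⟩
        · exact ⟨a, hax, s₀, hgt⟩
      · push_neg at hclose
        obtain ⟨mstar, hmstar, hmfar⟩ := hclose
        have hcov : ∀ z : X, z ∈ closure {y : X | ∃ s : S, s • a = y} →
            ∃ u : S, u • z ∈ Metric.ball mstar (D/32) := by
          intro z hz
          have hm : mstar ∈ closure {w : X | ∃ s : S, s • z = w} := hMamin z hz hmstar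
          obtain ⟨bb, ⟨u, rfl⟩, hbb⟩ := Metric.mem_closure_iff.mp hm (D/32) (by positivity)
          exact ⟨u, Metric.mem_ball.mpr (by rw [dist_comm]; exact hbb)⟩
        choose! t ht using hcov
        have hcover : closure {y : X | ∃ s : S, s • a = y} ⊆
            ⋃ z : closure {y : X | ∃ s : S, s • a = y},
              (fun y : X => t (z : X) • y) ⁻¹' Metric.ball mstar (D/32) := by
          intro z hz
          exact Set.mem_iUnion.mpr ⟨⟨z, hz⟩, ht z hz⟩
        obtain ⟨F, hF⟩ := hMac.elim_finite_subcover _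
          (fun i => Metric.isOpen_ball.preimage (hcontS _)) hcover
        have hWopen : IsOpen (⋂ i ∈ F,
            (fun y : X => t (i : X) • y) ⁻¹' {y : X | Metric.infDist y Y < D/32}) :=
          isOpen_biInter_finset fun i _ =>
            (isOpen_lt (Metric.continuous_infDist_pt Y) continuous_const).preimage (hcontS _)
        obtain ⟨q, hq⟩ := hYne
        have hqW : q ∈ ⋂ i ∈ F,
            (fun y : X => t (i : X) • y) ⁻¹' {y : X | Metric.infDist y Y < D/32} := by
          refine Set.mem_iInter₂.mpr fun i _ => ?_
          simp only [Set.mem_preimage, Set.mem_setOf_eq]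
          rw [Metric.infDist_zero_of_mem (hYinv _ _ hq)]
          positivity
        obtain ⟨s₀, v, hvB, hvW⟩ := hTT _ (Metric.ball x δ) hWopen ⟨q, hqW⟩
          Metric.isOpen_ball ⟨x, Metric.mem_ball_self hδ⟩
        obtain ⟨i, hiF, hi⟩ := Set.mem_iUnion₂.mp (hF (horb_a s₀))
        have hka : dist (t (i : X) • (s₀ • a)) mstar < D/32 := Metric.mem_ball.mp hi
        have hkv : Metric.infDist (t (i : X) • (s₀ • v)) Y < D/32 := by
          have := Set.mem_iInter₂.mp hvW i hiF
          simpa only [Set.mem_preimage, Set.mem_setOf_eq] using this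
        obtain ⟨q', hq', hq'd⟩ := (Metric.infDist_lt_iff ⟨q, hq⟩).mp hkv
        have hstep : Metric.infDist mstar Y ≤
            Metric.infDist (t (i : X) • (s₀ • a)) Y + dist mstar (t (i : X) • (s₀ • a)) :=
          Metric.infDist_le_infDist_add_dist
        have hlow : Metric.infDist (t (i : X) • (s₀ • a)) Y ≤
            dist (t (i : X) • (s₀ • a)) q' := Metric.infDist_le_dist_of_mem hq'
        have tri2 : dist (t (i : X) • (s₀ • a)) q' ≤
            dist (t (i : X) • (s₀ • a)) (t (i : X) • (s₀ • v)) +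
              dist (t (i : X) • (s₀ • v)) q' := dist_triangle _ _ _
        have hcomm : dist mstar (t (i : X) • (s₀ • a)) < D/32 := by
          rw [dist_comm]; exact hka
        have hsep : dist ((t (i : X) * s₀) • a) ((t (i : X) * s₀) • v) > D/16 := by
          rw [hact, hact]
          linarith
        have tri3 : dist ((t (i : X) * s₀) • a) ((t (i : X) * s₀) • v) ≤
            dist ((t (i : X) * s₀) • x) ((t (i : X) * s₀) • a) +
              dist ((t (i : X) * s₀) • x) ((t (i : X) * s₀) • v) := by
          rw [dist_comm ((t (i : X) * s₀) • x) ((t (i : X) * s₀) • a)]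
          exact dist_triangle _ _ _
        rcases le_or_gt (dist ((t (i : X) * s₀) • x) ((t (i : X) * s₀) • a)) (D/33)
          with hle | hgt
        · refine ⟨v, by rw [dist_comm]; exact Metric.mem_ball.mp hvB,
            t (i : X) * s₀, by linarith⟩
        · exact ⟨a, hax, t (i : X) * s₀, hgt⟩
    rcases le_or_gt (D/2) (Metric.infDist x Y₁) with h | h
    · exact key Y₁ hY₁ne hY₁inv h
    · exact key Y₂ hY₂ne hY₂inv (by linarith)
end

section
/- In an M-system (S,X) on a Polish metric space with S a C-semigroup, every equicontinuity point is a minimal point: if x₀ ∈ Eq(X), then for every ε > 0 the set N(x₀, B_ε(x₀)) = {s ∈ S : d(sx₀, x₀) < ε} is syndetic, and hence closure(Sx₀) is a minimal subsystem. -/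
/-- In an M-system of a C-semigroup on a Polish metric space, every
equicontinuity point x₀ is a minimal point: for every ε > 0 the set
N(x₀, B_ε(x₀)) is syndetic, and closure(Sx₀) is minimal. -/
theorem stmt_16 {S X : Type*} [TopologicalSpace S] [Semigroup S] [MetricSpace X]
    [PolishSpace X] [SMul S X]
    (hact : ∀ (s t : S) (x : X), (s * t) • x = s • t • x)
    (hcont : Continuous fun p : S × X => p.1 • p.2)
    (hC : ∀ s₀ : S, IsCompact (closure {s : S | ¬ ∃ t : S, t * s₀ = s}))
    (hTT : ∀ U V : Set X, IsOpen U → U.Nonempty → IsOpen V → V.Nonempty →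
      ∃ s : S, ∃ v ∈ V, s • v ∈ U)
    (hAP : Dense {x : X | IsCompact (closure {y : X | ∃ s : S, s • x = y}) ∧
      ∀ y ∈ closure {y : X | ∃ s : S, s • x = y},
        closure {y : X | ∃ s : S, s • x = y} ⊆ closure {z : X | ∃ s : S, s • y = z}})
    (x₀ : X)
    (heq : ∀ ε > 0, ∃ δ > 0, ∀ x : X, dist x₀ x < δ →
      ∀ s : S, dist (s • x₀) (s • x) < ε) :
    (∀ ε > (0:ℝ), ∃ F : Finset S, ∀ s : S, ∃ f ∈ F, dist ((f * s) • x₀) x₀ < ε) ∧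
    (∀ y ∈ closure {y : X | ∃ s : S, s • x₀ = y},
      closure {y : X | ∃ s : S, s • x₀ = y} ⊆ closure {z : X | ∃ s : S, s • y = z}) := by
  -- each translation is continuous
  have hcs : ∀ s : S, Continuous fun z : X => s • z := fun s =>
    hcont.comp (Continuous.prodMk continuous_const continuous_id)
  -- x₀ is a transitive point
  have htrans : ∀ z : X, ∀ η > (0:ℝ), ∃ s : S, dist (s • x₀) z < η := by
    intro z η hη
    obtain ⟨δ, hδpos, hδ⟩ := heq (η / 2) (by linarith)
    obtain ⟨s, v, hv, hsv⟩ := hTT (Metric.ball z (η / 2)) (Metric.ball x₀ δ)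
      Metric.isOpen_ball ⟨z, Metric.mem_ball_self (by linarith)⟩
      Metric.isOpen_ball ⟨x₀, Metric.mem_ball_self hδpos⟩
    refine ⟨s, ?_⟩
    have h1 : dist (s • x₀) (s • v) < η / 2 := hδ v (by rw [dist_comm]; exact hv) s
    calc dist (s • x₀) z ≤ dist (s • x₀) (s • v) + dist (s • v) z := dist_triangle _ _ _
      _ < η / 2 + η / 2 := add_lt_add h1 hsv
      _ = η := by ring
  -- syndeticity of the return set
  have hsynd : ∀ ε > (0:ℝ), ∃ F : Finset S, ∀ s : S, ∃ f ∈ F,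
      dist ((f * s) • x₀) x₀ < ε := by
    intro ε hε
    obtain ⟨δ, hδpos, hδ⟩ := heq (ε / 3) (by linarith)
    have hδ'pos : 0 < min δ (ε / 3) := lt_min hδpos (by linarith)
    obtain ⟨x, hxAP, hxd⟩ := Metric.mem_closure_iff.mp (hAP x₀) _ hδ'pos
    obtain ⟨hKcpt, hKmin⟩ := hxAP
    have hx₀x : dist x₀ x < δ := lt_of_lt_of_le hxd (min_le_left _ _)
    obtain ⟨s₀, hs₀⟩ := htrans x₀ (ε / 3) (by linarith)
    have hy1 : dist (s₀ • x) x₀ < 2 * (ε / 3) := by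
      have h1 : dist (s₀ • x₀) (s₀ • x) < ε / 3 := hδ x hx₀x s₀
      calc dist (s₀ • x) x₀ ≤ dist (s₀ • x) (s₀ • x₀) + dist (s₀ • x₀) x₀ :=
            dist_triangle _ _ _
        _ < ε / 3 + ε / 3 := add_lt_add (by rw [dist_comm]; exact h1) hs₀
        _ = 2 * (ε / 3) := by ring
    have hyK : s₀ • x ∈ closure {y : X | ∃ s : S, s • x = y} :=
      subset_closure ⟨s₀, rfl⟩
    -- cover the orbit closure of x by preimages of the ball
    have hcover : closure {y : X | ∃ s : S, s • x = y} ⊆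
        ⋃ s : S, {y : X | s • y ∈ Metric.ball x₀ (2 * (ε / 3))} := by
      intro y hy
      have h1 : s₀ • x ∈ closure {z : X | ∃ s : S, s • y = z} := hKmin y hy hyK
      obtain ⟨z, hz1, hz2⟩ := (_root_.mem_closure_iff.mp h1)
        (Metric.ball x₀ (2 * (ε / 3))) Metric.isOpen_ball hy1
      obtain ⟨s, rfl⟩ := hz2
      exact Set.mem_iUnion.mpr ⟨s, hz1⟩
    obtain ⟨F, hF⟩ := hKcpt.elim_finite_subcover
      (fun s : S => {y : X | s • y ∈ Metric.ball x₀ (2 * (ε / 3))})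
      (fun s => Metric.isOpen_ball.preimage (hcs s)) hcover
    refine ⟨F, fun s => ?_⟩
    have hsx : s • x ∈ closure {y : X | ∃ s : S, s • x = y} := subset_closure ⟨s, rfl⟩
    obtain ⟨f, hfF, hf⟩ := Set.mem_iUnion₂.mp (hF hsx)
    refine ⟨f, hfF, ?_⟩
    have h2 : dist ((f * s) • x) x₀ < 2 * (ε / 3) := by
      rw [hact]; exact hf
    have h1 : dist ((f * s) • x₀) ((f * s) • x) < ε / 3 := hδ x hx₀x (f * s)
    calc dist ((f * s) • x₀) x₀ ≤ dist ((f * s) • x₀) ((f * s) • x) +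
          dist ((f * s) • x) x₀ := dist_triangle _ _ _
      _ < ε / 3 + 2 * (ε / 3) := add_lt_add h1 h2
      _ = ε := by ring
  refine ⟨hsynd, fun y hy => ?_⟩
  -- first: x₀ belongs to the orbit closure of y
  have hx₀cl : x₀ ∈ closure {z : X | ∃ s : S, s • y = z} := by
    rw [Metric.mem_closure_iff]
    intro ε hε
    obtain ⟨F, hF⟩ := hsynd (ε / 2) (by linarith)
    have hsub : {w : X | ∃ s : S, s • x₀ = w} ⊆
        ⋃ f ∈ F, {z : X | dist (f • z) x₀ ≤ ε / 2} := by
      rintro w ⟨s, rfl⟩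
      obtain ⟨f, hfF, hf⟩ := hF s
      refine Set.mem_iUnion₂.mpr ⟨f, hfF, ?_⟩
      have : dist (f • s • x₀) x₀ < ε / 2 := by rw [← hact]; exact hf
      exact le_of_lt this
    have hclosed : IsClosed (⋃ f ∈ F, {z : X | dist (f • z) x₀ ≤ ε / 2}) := by
      refine Set.Finite.isClosed_biUnion F.finite_toSet (fun f _ => ?_)
      exact Metric.isClosed_closedBall.preimage (hcs f)
    have hy' := closure_minimal hsub hclosed hy
    obtain ⟨f, _, hf⟩ := Set.mem_iUnion₂.mp hy'
    exact ⟨f • y, ⟨f, rfl⟩, by rw [dist_comm]; exact lt_of_le_of_lt hf (by linarith)⟩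
  -- then: the whole orbit closure of x₀ is inside the orbit closure of y
  refine closure_minimal ?_ isClosed_closure
  rintro w ⟨s, rfl⟩
  have himg : s • x₀ ∈ (fun z : X => s • z) '' closure {z : X | ∃ s : S, s • y = z} :=
    ⟨x₀, hx₀cl, rfl⟩
  have h1 := image_closure_subset_closure_image (hcs s) himg
  refine closure_mono ?_ h1
  rintro _ ⟨z, ⟨t, rfl⟩, rfl⟩
  exact ⟨s * t, hact s t y⟩
end
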